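/- arXiv:1510.08865 — 13 statements merged into one kernel-verified Lean document; each statement's English description precedes it below -/
import Mathlib

section
/- Let f and h be submodular set functions on a finite ground set V such that f - h is either monotone non-decreasing or monotone non-increasing. Then g(S) = min{f(S), h(S)} is submodular. -/
open Finset

def Submodular {V : Type*} [DecidableEq V] (f : Finset V → ℝ) : Prop :=
  ∀ S T : Finset V, f (S ∪ T) + f (S ∩ T) ≤ f S + f T

theorem stmt0 {V : Type*} [Fintype V] [DecidableEq V]
    (f h : Finset V → ℝ) (hf : Submodular f) (hh : Submodular h)
    (hmono : (∀ S T : Finset V, S ⊆ T → f S - h S ≤ f T - h T) ∨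
             (∀ S T : Finset V, S ⊆ T → f T - h T ≤ f S - h S)) :
    Submodular (fun S => min (f S) (h S)) := by
  intro S T
  simp only
  have hfST := hf S T
  have hhST := hh S T
  have m1 : min (f (S ∪ T)) (h (S ∪ T)) ≤ f (S ∪ T) := min_le_left _ _
  have m2 : min (f (S ∪ T)) (h (S ∪ T)) ≤ h (S ∪ T) := min_le_right _ _
  have m3 : min (f (S ∩ T)) (h (S ∩ T)) ≤ f (S ∩ T) := min_le_left _ _
  have m4 : min (f (S ∩ T)) (h (S ∩ T)) ≤ h (S ∩ T) := min_le_right _ _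
  rcases le_total (f S) (h S) with hS | hS <;>
    rcases le_total (f T) (h T) with hT | hT
  · rw [min_eq_left hS, min_eq_left hT]
    linarith
  · -- f S ≤ h S, h T ≤ f T
    rw [min_eq_left hS, min_eq_right hT]
    rcases hmono with hm | hm
    · have := hm (S ∩ T) S inter_subset_left
      linarith
    · have := hm (S ∩ T) T inter_subset_right
      linarith
  · -- h S ≤ f S, f T ≤ h T
    rw [min_eq_right hS, min_eq_left hT]
    rcases hmono with hm | hm
    · have := hm (S ∩ T) T inter_subset_right
      linarith
    · have := hm (S ∩ T) S inter_subset_left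
      linarith
  · rw [min_eq_right hS, min_eq_right hT]
    linarith
end

section
/- If f1 and f2 are monotone non-decreasing submodular functions on a finite ground set V, then the set function A ↦ min{f1(A), f2(V \ A)} is submodular. -/
open Finset

theorem stmt1 {V : Type*} [Fintype V] [DecidableEq V]
    (f₁ f₂ : Finset V → ℝ) (hf₁ : Submodular f₁) (hf₂ : Submodular f₂)
    (hm₁ : ∀ S T : Finset V, S ⊆ T → f₁ S ≤ f₁ T)
    (hm₂ : ∀ S T : Finset V, S ⊆ T → f₂ S ≤ f₂ T) :
    Submodular (fun A : Finset V => min (f₁ A) (f₂ Aᶜ)) := by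
  intro S T
  simp only
  rcases le_total (f₁ S) (f₂ Sᶜ) with hS | hS <;>
    rcases le_total (f₁ T) (f₂ Tᶜ) with hT | hT
  · calc min (f₁ (S ∪ T)) (f₂ (S ∪ T)ᶜ) + min (f₁ (S ∩ T)) (f₂ (S ∩ T)ᶜ)
        ≤ f₁ (S ∪ T) + f₁ (S ∩ T) := add_le_add (min_le_left _ _) (min_le_left _ _)
      _ ≤ f₁ S + f₁ T := hf₁ S T
      _ = min (f₁ S) (f₂ Sᶜ) + min (f₁ T) (f₂ Tᶜ) := by
          rw [min_eq_left hS, min_eq_left hT]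
  · -- g S = f₁ S, g T = f₂ Tᶜ
    calc min (f₁ (S ∪ T)) (f₂ (S ∪ T)ᶜ) + min (f₁ (S ∩ T)) (f₂ (S ∩ T)ᶜ)
        ≤ f₂ (S ∪ T)ᶜ + f₁ (S ∩ T) := add_le_add (min_le_right _ _) (min_le_left _ _)
      _ ≤ f₂ Tᶜ + f₁ S := add_le_add
          (hm₂ _ _ (Finset.compl_subset_compl.mpr Finset.subset_union_right))
          (hm₁ _ _ Finset.inter_subset_left)
      _ = min (f₁ S) (f₂ Sᶜ) + min (f₁ T) (f₂ Tᶜ) := by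
          rw [min_eq_left hS, min_eq_right hT, add_comm]
  · -- g S = f₂ Sᶜ, g T = f₁ T
    calc min (f₁ (S ∪ T)) (f₂ (S ∪ T)ᶜ) + min (f₁ (S ∩ T)) (f₂ (S ∩ T)ᶜ)
        ≤ f₂ (S ∪ T)ᶜ + f₁ (S ∩ T) := add_le_add (min_le_right _ _) (min_le_left _ _)
      _ ≤ f₂ Sᶜ + f₁ T := add_le_add
          (hm₂ _ _ (Finset.compl_subset_compl.mpr Finset.subset_union_left))
          (hm₁ _ _ Finset.inter_subset_right)
      _ = min (f₁ S) (f₂ Sᶜ) + min (f₁ T) (f₂ Tᶜ) := by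
          rw [min_eq_right hS, min_eq_left hT]
  · calc min (f₁ (S ∪ T)) (f₂ (S ∪ T)ᶜ) + min (f₁ (S ∩ T)) (f₂ (S ∩ T)ᶜ)
        ≤ f₂ (S ∪ T)ᶜ + f₂ (S ∩ T)ᶜ := add_le_add (min_le_right _ _) (min_le_right _ _)
      _ = f₂ (Sᶜ ∩ Tᶜ) + f₂ (Sᶜ ∪ Tᶜ) := by rw [Finset.compl_union, Finset.compl_inter]
      _ ≤ f₂ Sᶜ + f₂ Tᶜ := by linarith [hf₂ Sᶜ Tᶜ]
      _ = min (f₁ S) (f₂ Sᶜ) + min (f₁ T) (f₂ Tᶜ) := by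
          rw [min_eq_right hS, min_eq_right hT]
end

section
/- For max-min submodular fair allocation in the homogeneous setting: the optimal value OPT = max over all m-partitions π of min_i f(A_i^π) satisfies OPT ≤ f'(V \ {a_2,…,a_m}) for the perturbed function f'(A) = f(A) + α·|A ∩ {a_2,…,a_m}| when α > f(V), and the optimal partition for f' is (V \ {a_2,…,a_m}, {a_2}, …, {a_m}); hence OPT ≤ f(V \ {a_2,…,a_m}). -/
open Finset

def IsPartition {V : Type*} [Fintype V] [DecidableEq V] {m : ℕ}
    (A : Fin m → Finset V) : Prop :=
  (∀ i j, i ≠ j → Disjoint (A i) (A j)) ∧ Finset.univ.biUnion A = Finset.univ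

theorem stmt5 {V : Type*} [Fintype V] [DecidableEq V] {m : ℕ}
    (f : Finset V → ℝ) (hsub : Submodular f)
    (hmono : ∀ S T : Finset V, S ⊆ T → f S ≤ f T) (hnorm : f ∅ = 0)
    (i₀ : Fin m) (a : Fin m → V)
    (hinj : ∀ i j, i ≠ i₀ → j ≠ i₀ → a i = a j → i = j)
    (α : ℝ) (hα : f Finset.univ < α) :
    let D : Finset V := (Finset.univ.filter (· ≠ i₀)).image a
    let f' : Finset V → ℝ := fun S => f S + α * ((S ∩ D).card : ℝ)
    let π₀ : Fin m → Finset V := fun i => if i = i₀ then Finset.univ \ D else {a i}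
    IsPartition π₀ ∧
    (∀ A : Fin m → Finset V, IsPartition A →
        univ.inf' ⟨i₀, mem_univ i₀⟩ (fun i => f' (A i)) ≤
          univ.inf' ⟨i₀, mem_univ i₀⟩ (fun i => f' (π₀ i))) ∧
    (∀ A : Fin m → Finset V, IsPartition A →
        univ.inf' ⟨i₀, mem_univ i₀⟩ (fun i => f (A i)) ≤ f' (Finset.univ \ D)) ∧
    (∀ A : Fin m → Finset V, IsPartition A →
        univ.inf' ⟨i₀, mem_univ i₀⟩ (fun i => f (A i)) ≤ f (Finset.univ \ D)) := by
  intro D f' π₀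
  have hm : 0 < m := i₀.pos
  have hfnn : ∀ S : Finset V, 0 ≤ f S := fun S => hnorm ▸ hmono ∅ S (empty_subset _)
  have hDcard : D.card = m - 1 := by
    have h1 : (univ.filter (· ≠ i₀)) = univ.erase i₀ := by
      ext x; simp [Finset.mem_erase, and_comm]
    have h2 : D = (univ.erase i₀).image a := by
      show (univ.filter (· ≠ i₀)).image a = _; rw [h1]
    rw [h2, Finset.card_image_of_injOn, Finset.card_erase_of_mem (mem_univ i₀),
      Finset.card_univ, Fintype.card_fin]
    intro i hi j hj hij
    exact hinj i j (by simpa using (Finset.mem_erase.mp hi).1)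
      (by simpa using (Finset.mem_erase.mp hj).1) hij
  have hmemD : ∀ i, i ≠ i₀ → a i ∈ D := fun i hi =>
    Finset.mem_image.mpr ⟨i, by simp [hi], rfl⟩
  have hf'eq : ∀ S : Finset V, Disjoint S D → f' S = f S := by
    intro S h
    show f S + α * _ = f S
    rw [Finset.disjoint_iff_inter_eq_empty.mp h]
    simp
  have key : ∀ A : Fin m → Finset V, IsPartition A → ∃ j, ∀ x ∈ A j, x ∉ D := by
    intro A hA
    obtain ⟨hdisj, hcover⟩ := hA
    by_contra h
    push_neg at h
    choose g hg1 hg2 using h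
    have hinjg : ∀ i j, g i = g j → i = j := by
      intro i j hij
      by_contra hne
      exact (Finset.disjoint_left.mp (hdisj i j hne)) (hg1 i) (hij ▸ hg1 j)
    have hle := Finset.card_le_card_of_injOn (s := (univ : Finset (Fin m)))
      (t := D) g (fun i _ => hg2 i) (fun i _ j _ h => hinjg i j h)
    rw [Finset.card_univ, Fintype.card_fin, hDcard] at hle
    omega
  have part4 : ∀ A : Fin m → Finset V, IsPartition A →
      univ.inf' ⟨i₀, mem_univ i₀⟩ (fun i => f (A i)) ≤ f (Finset.univ \ D) := by
    intro A hA
    obtain ⟨j, hj⟩ := key A hA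
    exact le_trans (Finset.inf'_le _ (mem_univ j))
      (hmono _ _ fun x hx => Finset.mem_sdiff.mpr ⟨mem_univ x, hj x hx⟩)
  refine ⟨⟨?_, ?_⟩, ?_, ?_, part4⟩
  · intro i j hij
    by_cases hi : i = i₀ <;> by_cases hj : j = i₀
    · exact absurd (hi.trans hj.symm) hij
    · subst hi
      simp only [π₀, if_pos rfl, if_neg hj]
      exact Finset.disjoint_singleton_right.mpr
        (by simp [Finset.mem_sdiff, hmemD j hj])
    · subst hj
      simp only [π₀, if_pos rfl, if_neg hi]
      exact Finset.disjoint_singleton_left.mpr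
        (by simp [Finset.mem_sdiff, hmemD i hi])
    · simp only [π₀, if_neg hi, if_neg hj]
      exact Finset.disjoint_singleton_left.mpr
        (fun h => hij (hinj i j hi hj (Finset.mem_singleton.mp h)))
  · ext x
    simp only [Finset.mem_biUnion, mem_univ, iff_true, true_and]
    by_cases hx : x ∈ D
    · obtain ⟨i, hi, rfl⟩ := Finset.mem_image.mp hx
      have hi' : i ≠ i₀ := (Finset.mem_filter.mp hi).2
      exact ⟨i, by simp [π₀, hi']⟩
    · exact ⟨i₀, by simp [π₀, hx]⟩
  · intro A hA
    obtain ⟨j, hj⟩ := key A hA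
    have hdisjj : Disjoint (A j) D := Finset.disjoint_left.mpr hj
    calc univ.inf' ⟨i₀, mem_univ i₀⟩ (fun i => f' (A i)) ≤ f' (A j) :=
          Finset.inf'_le _ (mem_univ j)
      _ = f (A j) := hf'eq _ hdisjj
      _ ≤ f (Finset.univ \ D) :=
          hmono _ _ fun x hx => Finset.mem_sdiff.mpr ⟨mem_univ x, hj x hx⟩
      _ ≤ univ.inf' ⟨i₀, mem_univ i₀⟩ (fun i => f' (π₀ i)) := by
          apply Finset.le_inf'
          intro i _
          by_cases hi : i = i₀
          · simp only [π₀, if_pos hi]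
            rw [hf'eq _ Finset.sdiff_disjoint]
          · simp only [π₀, if_neg hi]
            have hai : ({a i} : Finset V) ∩ D = {a i} := by
              rw [Finset.inter_eq_left]; simpa using hmemD i hi
            have hfe : f' {a i} = f {a i} + α := by
              show f _ + α * _ = _
              rw [hai]; simp
            rw [hfe]
            have h1 : f (Finset.univ \ D) ≤ α :=
              le_trans (hmono _ _ (Finset.subset_univ _)) hα.le
            linarith [hfnn {a i}]
  · intro A hA
    rw [hf'eq _ Finset.sdiff_disjoint]
    exact part4 A hA
end

section
/- Let x_1*, …, x_m* ∈ [0,1]^n satisfy Σ_{i=1}^m x_i*(j) ≥ 1 for every j ∈ {1,…,n}, and round to a partition (A_1,…,A_m) by assigning each j to a block î with x_î*(j) = max_i x_i*(j). Then for every i, f̃_i(x_i*) ≥ (1/m)·f_i(A_i), where f̃_i is the Lovász extension of f_i. Consequently max_i f_i(A_i) ≤ m · max_i f̃_i(x_i*). -/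
open Finset

theorem stmt8 {V : Type*} [Fintype V] [DecidableEq V] {m : ℕ}
    (hne : (Finset.univ : Finset (Fin m)).Nonempty)
    (f : Fin m → Finset V → ℝ)
    (hsub : ∀ i, Submodular (f i))
    (hmono : ∀ i, ∀ S T : Finset V, S ⊆ T → f i S ≤ f i T)
    (hnorm : ∀ i, f i ∅ = 0)
    -- the Lovász extensions of the `f i`, with their characteristic properties
    (ext : Fin m → (V → ℝ) → ℝ)
    (hext_mono : ∀ i (x y : V → ℝ), (∀ v, x v ≤ y v) → ext i x ≤ ext i y)
    (hext_homog : ∀ i (c : ℝ) (x : V → ℝ), 0 ≤ c → ext i (fun v => c * x v) = c * ext i x)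
    (hext_ind : ∀ i (A : Finset V), ext i (fun v => if v ∈ A then (1 : ℝ) else 0) = f i A)
    -- the fractional solution
    (x : Fin m → V → ℝ)
    (hx01 : ∀ i v, 0 ≤ x i v ∧ x i v ≤ 1)
    (hcover : ∀ v, 1 ≤ ∑ i, x i v)
    -- the rounded partition: each element goes to a block maximizing its fractional value
    (A : Fin m → Finset V) (hA : IsPartition A)
    (hround : ∀ i (v : V), v ∈ A i → ∀ i', x i' v ≤ x i v) :
    (∀ i, (1 / (m : ℝ)) * f i (A i) ≤ ext i (x i)) ∧
    univ.sup' hne (fun i => f i (A i)) ≤ (m : ℝ) * univ.sup' hne (fun i => ext i (x i)) := by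

  have hm : 0 < m := hne.choose.pos
  have hmr : (0:ℝ) < m := Nat.cast_pos.mpr hm
  have key : ∀ i, (1 / (m : ℝ)) * f i (A i) ≤ ext i (x i) := by
    intro i
    have h1 : (1 / (m : ℝ)) * f i (A i)
        = ext i (fun v => (1 / (m:ℝ)) * (if v ∈ A i then (1:ℝ) else 0)) := by
      rw [hext_homog i _ _ (by positivity), hext_ind]
    rw [h1]
    apply hext_mono
    intro v
    by_cases hv : v ∈ A i
    · simp only [hv, if_true, mul_one]
      rw [div_le_iff₀ hmr, mul_comm]
      calc (1:ℝ) ≤ ∑ i', x i' v := hcover v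
        _ ≤ ∑ _i' : Fin m, x i v := Finset.sum_le_sum (fun i' _ => hround i v hv i')
        _ = (m:ℝ) * x i v := by simp [mul_comm]
    · simp [hv, (hx01 i v).1]
  refine ⟨key, ?_⟩
  rw [Finset.sup'_le_iff]
  intro i _
  have := key i
  have h2 : f i (A i) ≤ (m:ℝ) * ext i (x i) := by
    rw [one_div, inv_mul_le_iff₀ hmr] at this
    linarith [this]
  calc f i (A i) ≤ (m:ℝ) * ext i (x i) := h2
    _ ≤ (m:ℝ) * univ.sup' hne (fun i => ext i (x i)) := by
        apply mul_le_mul_of_nonneg_left _ (le_of_lt hmr)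
        exact Finset.le_sup' (fun i => ext i (x i)) (Finset.mem_univ i)
end

section
/- The Lovász-extension relaxation-and-rounding algorithm for submodular load balancing achieves approximation factor m: if (x_1*,…,x_m*) minimizes max_i f̃_i(x_i) subject to x_i ∈ [0,1]^n and Σ_i x_i(j) ≥ 1 for all j, and π̂ is the partition obtained by assigning each element to the block with maximum fractional value, then max_i f_i(A_i^{π̂}) ≤ m · min over all m-partitions π of max_i f_i(A_i^π). -/
open Finset

theorem stmt9 {V : Type*} [Fintype V] [DecidableEq V] {m : ℕ}
    (hne : (Finset.univ : Finset (Fin m)).Nonempty)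
    (f : Fin m → Finset V → ℝ)
    (hsub : ∀ i, Submodular (f i))
    (hmono : ∀ i, ∀ S T : Finset V, S ⊆ T → f i S ≤ f i T)
    (hnorm : ∀ i, f i ∅ = 0)
    -- the Lovász extensions of the `f i`, with their characteristic properties
    (ext : Fin m → (V → ℝ) → ℝ)
    (hext_mono : ∀ i (x y : V → ℝ), (∀ v, x v ≤ y v) → ext i x ≤ ext i y)
    (hext_homog : ∀ i (c : ℝ) (x : V → ℝ), 0 ≤ c → ext i (fun v => c * x v) = c * ext i x)
    (hext_ind : ∀ i (A : Finset V), ext i (fun v => if v ∈ A then (1 : ℝ) else 0) = f i A)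
    -- the fractional solution: feasible and optimal for the relaxation
    (x : Fin m → V → ℝ)
    (hx01 : ∀ i v, 0 ≤ x i v ∧ x i v ≤ 1)
    (hcover : ∀ v, 1 ≤ ∑ i, x i v)
    (hopt : ∀ y : Fin m → V → ℝ, (∀ i v, 0 ≤ y i v ∧ y i v ≤ 1) → (∀ v, 1 ≤ ∑ i, y i v) →
      univ.sup' hne (fun i => ext i (x i)) ≤ univ.sup' hne (fun i => ext i (y i)))
    -- the rounded partition: each element goes to a block maximizing its fractional value
    (A : Fin m → Finset V) (hA : IsPartition A)
    (hround : ∀ i (v : V), v ∈ A i → ∀ i', x i' v ≤ x i v) :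
    ∀ B : Fin m → Finset V, IsPartition B →
      univ.sup' hne (fun i => f i (A i)) ≤ (m : ℝ) * univ.sup' hne (fun i => f i (B i)) := by
  intro B hB
  have key : ∀ i, f i (A i) ≤ (m : ℝ) * ext i (x i) := by
    intro i
    calc f i (A i) = ext i (fun v => if v ∈ A i then (1:ℝ) else 0) := (hext_ind i (A i)).symm
      _ ≤ ext i (fun v => (m:ℝ) * x i v) := by
          apply hext_mono
          intro v
          by_cases hv : v ∈ A i
          · simp only [hv, if_pos]
            have h1 : (1:ℝ) ≤ ∑ i', x i' v := hcover v
            have h2 : ∑ i', x i' v ≤ ∑ _i' : Fin m, x i v :=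
              Finset.sum_le_sum fun i' _ => hround i v hv i'
            have h3 : ∑ _i' : Fin m, x i v = (m:ℝ) * x i v := by
              simp [Finset.sum_const, Finset.card_univ]
            linarith
          · simp only [hv, if_neg, not_false_iff]
            exact mul_nonneg (by positivity) (hx01 i v).1
      _ = (m:ℝ) * ext i (x i) := hext_homog i m (x i) (by positivity)
  set y : Fin m → V → ℝ := fun i v => if v ∈ B i then 1 else 0 with hy
  have hy01 : ∀ i v, 0 ≤ y i v ∧ y i v ≤ 1 := by
    intro i v; by_cases h : v ∈ B i <;> simp [hy, h]
  have hycover : ∀ v, 1 ≤ ∑ i, y i v := by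
    intro v
    obtain ⟨i, _, hvi⟩ := Finset.mem_biUnion.mp (hB.2 ▸ Finset.mem_univ v)
    calc (1:ℝ) = y i v := by simp [hy, hvi]
      _ ≤ ∑ i, y i v := Finset.single_le_sum (fun j _ => (hy01 j v).1) (Finset.mem_univ i)
  have hopt' := hopt y hy01 hycover
  have heq : univ.sup' hne (fun i => ext i (y i)) = univ.sup' hne (fun i => f i (B i)) := by
    apply Finset.sup'_congr hne rfl
    intro i _; exact hext_ind i (B i)
  rw [heq] at hopt'
  apply Finset.sup'_le
  intro i _
  calc f i (A i) ≤ (m:ℝ) * ext i (x i) := key i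
    _ ≤ (m:ℝ) * univ.sup' hne (fun i => ext i (x i)) :=
        mul_le_mul_of_nonneg_left (Finset.le_sup' (fun i => ext i (x i)) (Finset.mem_univ i)) (by positivity)
    _ ≤ (m:ℝ) * univ.sup' hne (fun i => f i (B i)) :=
        mul_le_mul_of_nonneg_left hopt' (by positivity)
end

section
/- Let y_1,…,y_m ≥ 0 be real numbers, c* > 0, set x_i = min{y_i, c*} and x̄ = (1/m)Σ_i x_i. Suppose x̄ ≥ α c* for some 0 < α ≤ 1. Then for any 0 < δ < α, the number of indices i with x_i ≥ (δ/(1-α+δ))·c* is at least ⌈m(α - δ)⌉. -/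
open Finset

/-!
Let `k` count the indices with `min (y i) c ≥ β c`, `β = δ / (1 - α + δ)`. If `k = m` there is
nothing to prove. Otherwise those `k` values contribute at most `c` each and the remaining ones
strictly less than `β c`, so `m α < k + (m - k) β`; clearing the denominator this reads
`(1 - α) (m (α - δ) - k) < 0`. Strictness is what makes the argument work also at `α = 1`.
-/

theorem Finset.sum_lt_card_filter_mul_add_of_card_filter_lt {ι : Type*} {s : Finset ι}
    {f : ι → ℝ} {c t : ℝ} (hf : ∀ i ∈ s, f i ≤ c) (hk : #(s.filter fun i => t ≤ f i) < #s) :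
    ∑ i ∈ s, f i <
      #(s.filter fun i => t ≤ f i) * c + (#s - #(s.filter fun i => t ≤ f i) : ℕ) * t := by
  have hsplit := card_filter_add_card_filter_not (s := s) (fun i => t ≤ f i)
  set good := s.filter fun i => t ≤ f i
  set bad := s.filter fun i => ¬ t ≤ f i
  have hbad_card : #bad = #s - #good := by omega
  have hbad_nonempty : bad.Nonempty := by
    rw [← card_pos, hbad_card]
    omega
  have hgood : ∑ i ∈ good, f i ≤ #good * c := by
    simpa using sum_le_card_nsmul good f c fun i hi => hf i (mem_filter.1 hi).1
  have hbad : ∑ i ∈ bad, f i < #bad * t := by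
    simpa using sum_lt_sum_of_nonempty hbad_nonempty (g := fun _ => t)
      fun i hi => not_le.1 (mem_filter.1 hi).2
  rw [← sum_filter_add_sum_filter_not s (fun i => t ≤ f i), ← hbad_card]
  linarith

theorem mul_sub_lt_of_mul_mul_lt_add_mul_div {m k c α δ : ℝ} (hc : 0 < c)
    (hα1 : α ≤ 1) (hτ : 0 < 1 - α + δ)
    (h : m * α * c < k * c + (m - k) * (δ / (1 - α + δ) * c)) :
    m * (α - δ) < k := by
  have hrhs : k * c + (m - k) * (δ / (1 - α + δ) * c)
      = (k * (1 - α + δ) + (m - k) * δ) * c / (1 - α + δ) := by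
    field_simp
  rw [hrhs, lt_div_iff₀ hτ] at h
  have hfactor : (1 - α) * (m * (α - δ) - k) * c < 0 := by linear_combination h
  exact sub_neg.1 (neg_of_mul_neg_right (neg_of_mul_neg_left hfactor hc.le) (sub_nonneg.2 hα1))

theorem stmt10_general {m : ℕ} (y : Fin m → ℝ)
    (c : ℝ) (hc : 0 < c) (α δ : ℝ) (hα1 : α ≤ 1)
    (hδ0 : 0 < δ)
    (havg : α * c ≤ (1 / (m : ℝ)) * ∑ i, min (y i) c) :
    ⌈(m : ℝ) * (α - δ)⌉₊ ≤
      (Finset.univ.filter (fun i => (δ / (1 - α + δ)) * c ≤ min (y i) c)).card := by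
  refine Nat.ceil_le.2 ?_
  rcases (card_filter_le univ fun i => δ / (1 - α + δ) * c ≤ min (y i) c).eq_or_lt with hk | hk
  · rw [hk, card_univ, Fintype.card_fin]
    exact mul_le_of_le_one_right m.cast_nonneg (by linarith)
  · have hm : (0 : ℝ) < m := by exact_mod_cast (Nat.zero_le _).trans_lt (hk.trans_eq (card_fin m))
    have hsum : (m : ℝ) * α * c ≤ ∑ i, min (y i) c := by
      rw [mul_assoc, ← le_div_iff₀' hm]
      simpa [div_eq_inv_mul] using havg
    have hlt := sum_lt_card_filter_mul_add_of_card_filter_lt (fun i _ => min_le_right (y i) c) hk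
    rw [card_univ, Fintype.card_fin, Nat.cast_sub (by simpa using hk.le)] at hlt
    exact (mul_sub_lt_of_mul_mul_lt_add_mul_div hc hα1 (by linarith) (hsum.trans_lt hlt)).le

theorem stmt10 {m : ℕ} (hm : 0 < m) (y : Fin m → ℝ) (hy : ∀ i, 0 ≤ y i)
    (c : ℝ) (hc : 0 < c) (α δ : ℝ) (hα0 : 0 < α) (hα1 : α ≤ 1)
    (hδ0 : 0 < δ) (hδα : δ < α)
    (havg : α * c ≤ (1 / (m : ℝ)) * ∑ i, min (y i) c) :
    ⌈(m : ℝ) * (α - δ)⌉₊ ≤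
      (Finset.univ.filter (fun i => (δ / (1 - α + δ)) * c ≤ min (y i) c)).card :=
  stmt10_general y c hc α δ hα1 hδ0 havg
end

section
/- Let y_1,…,y_m be real numbers of the form y_i = (1-λ) a_i + λ ȳ' where a_i ≥ 0 and ȳ' = (1/m)Σ_j a_j, with 0 ≤ λ ≤ 1. Then y_i ≥ λ ȳ for every i, where ȳ = (1/m)Σ_i y_i. Moreover, if c* > 0 and x_i = min{y_i, c*}, then x_i ≥ λ x̄ for every i, where x̄ = (1/m)Σ_i x_i. -/
open Finset

theorem stmt11 {m : ℕ} (hm : 0 < m) (a : Fin m → ℝ) (ha : ∀ i, 0 ≤ a i)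
    (lam : ℝ) (hlam0 : 0 ≤ lam) (hlam1 : lam ≤ 1) (c : ℝ) (hc : 0 < c) :
    let y : Fin m → ℝ := fun i => (1 - lam) * a i + lam * ((1 / (m : ℝ)) * ∑ j, a j)
    let x : Fin m → ℝ := fun i => min (y i) c
    (∀ i, lam * ((1 / (m : ℝ)) * ∑ j, y j) ≤ y i) ∧
    (∀ i, lam * ((1 / (m : ℝ)) * ∑ j, x j) ≤ x i) := by
  intro y x
  have hmR : (0:ℝ) < m := Nat.cast_pos.mpr hm
  have hS : 0 ≤ ∑ j, a j := Finset.sum_nonneg fun j _ => ha j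
  have habar : 0 ≤ (1 / (m : ℝ)) * ∑ j, a j := by positivity
  -- sum of y equals sum of a
  have hsumy : ∑ j, y j = ∑ j, a j := by
    have h : ∑ j, y j = (1 - lam) * ∑ j, a j + lam * ∑ j, a j := by
      simp only [y]
      rw [Finset.sum_add_distrib, ← Finset.mul_sum, Finset.sum_const,
        Finset.card_univ, Fintype.card_fin, nsmul_eq_mul]
      congr 1
      rw [← mul_assoc, mul_comm (m:ℝ) lam, mul_assoc, ← mul_assoc (m:ℝ),
        mul_one_div_cancel hmR.ne', one_mul]
    rw [h]; ring
  have hynn : ∀ i, 0 ≤ y i := by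
    intro i
    have : 0 ≤ (1 - lam) * a i := mul_nonneg (by linarith) (ha i)
    have : 0 ≤ lam * ((1 / (m : ℝ)) * ∑ j, a j) := mul_nonneg hlam0 habar
    simp only [y]; linarith [mul_nonneg (sub_nonneg.mpr hlam1) (ha i)]
  have hy : ∀ i, lam * ((1 / (m : ℝ)) * ∑ j, y j) ≤ y i := by
    intro i
    rw [hsumy]
    have h1 : 0 ≤ (1 - lam) * a i := mul_nonneg (by linarith) (ha i)
    have h2 : lam * ((1 / (m : ℝ)) * ∑ j, a j) ≤ y i := by
      simp only [y]; linarith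
    exact h2
  refine ⟨hy, ?_⟩
  intro i
  have hxle : ∀ j, x j ≤ y j := fun j => min_le_left _ _
  have hxlec : ∀ j, x j ≤ c := fun j => min_le_right _ _
  have hxnn : ∀ j, 0 ≤ x j := fun j => le_min (hynn j) hc.le
  have hsumle : ∑ j, x j ≤ ∑ j, y j := Finset.sum_le_sum fun j _ => hxle j
  have hsumnn : 0 ≤ ∑ j, x j := Finset.sum_nonneg fun j _ => hxnn j
  have hxbar : (1 / (m : ℝ)) * ∑ j, x j ≤ (1 / (m : ℝ)) * ∑ j, y j :=
    mul_le_mul_of_nonneg_left hsumle (by positivity)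
  have hxbarnn : 0 ≤ (1 / (m : ℝ)) * ∑ j, x j := by positivity
  have hxbarc : (1 / (m : ℝ)) * ∑ j, x j ≤ c := by
    have : ∑ j, x j ≤ m * c := by
      calc ∑ j, x j ≤ ∑ _j : Fin m, c := Finset.sum_le_sum fun j _ => hxlec j
        _ = m * c := by simp [Finset.sum_const, Finset.card_univ, mul_comm]
    rw [one_div, inv_mul_le_iff₀ hmR] at *
    linarith
  refine le_min ?_ ?_
  · calc lam * ((1 / (m : ℝ)) * ∑ j, x j) ≤ lam * ((1 / (m : ℝ)) * ∑ j, y j) :=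
        mul_le_mul_of_nonneg_left hxbar hlam0
      _ ≤ y i := hy i
  · calc lam * ((1 / (m : ℝ)) * ∑ j, x j) ≤ 1 * ((1 / (m : ℝ)) * ∑ j, x j) :=
        mul_le_mul_of_nonneg_right hlam1 hxbarnn
      _ = (1 / (m : ℝ)) * ∑ j, x j := one_mul _
      _ ≤ c := hxbarc
end

section
/- GeneralGreedSat guarantee: given 0 ≤ α ≤ 1, 0 ≤ λ ≤ 1, and a partition π̂ such that (1/m)Σ_{i=1}^m min{(1-λ) f_i(A_i^{π̂}) + (λ/m)Σ_j f_j(A_j^{π̂}), c*} ≥ α c* with c* ≥ OPT − ε, then (1-λ) min_i f_i(A_i^{π̂}) + (λ/m)Σ_i f_i(A_i^{π̂}) ≥ λ α (OPT − ε), where OPT = max over m-partitions π of (1-λ) min_i f_i(A_i^π) + (λ/m)Σ_i f_i(A_i^π). -/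
open Finset

theorem stmt12 {V : Type*} [Fintype V] [DecidableEq V] {m : ℕ}
    (hne : (Finset.univ : Finset (Fin m)).Nonempty)
    (f : Fin m → Finset V → ℝ)
    (hsub : ∀ i, Submodular (f i))
    (hmono : ∀ i, ∀ S T : Finset V, S ⊆ T → f i S ≤ f i T)
    (hnorm : ∀ i, f i ∅ = 0)
    (α lam ε c OPT : ℝ)
    (hα0 : 0 ≤ α) (hα1 : α ≤ 1) (hlam0 : 0 ≤ lam) (hlam1 : lam ≤ 1)
    (hε : 0 ≤ ε) (hc : 0 < c)
    (π : Fin m → Finset V) (hπ : IsPartition π)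
    (hOPT : IsGreatest {v : ℝ | ∃ B : Fin m → Finset V, IsPartition B ∧
        v = (1 - lam) * univ.inf' hne (fun i => f i (B i)) +
            (lam / (m : ℝ)) * ∑ i, f i (B i)} OPT)
    (hcOPT : OPT - ε ≤ c)
    (hsat : α * c ≤ (1 / (m : ℝ)) *
        ∑ i, min ((1 - lam) * f i (π i) + (lam / (m : ℝ)) * ∑ j, f j (π j)) c) :
    lam * α * (OPT - ε) ≤
      (1 - lam) * univ.inf' hne (fun i => f i (π i)) + (lam / (m : ℝ)) * ∑ i, f i (π i) := by

  obtain ⟨i0, -⟩ := id hne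
  have hm : 0 < (m : ℝ) := by exact_mod_cast i0.pos
  have hf0 : ∀ i, 0 ≤ f i (π i) := fun i => by
    have := hmono i ∅ (π i) (Finset.empty_subset _)
    simpa [hnorm i] using this
  set S := ∑ j, f j (π j) with hSdef
  have hS0 : 0 ≤ S := Finset.sum_nonneg (fun i _ => hf0 i)
  set y := fun i => (1 - lam) * f i (π i) + (lam / (m : ℝ)) * S with hy
  have hyS : ∑ i, y i = S := by
    simp only [hy]
    rw [Finset.sum_add_distrib, ← Finset.mul_sum, Finset.sum_const, Finset.card_univ,
      Fintype.card_fin, nsmul_eq_mul]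
    field_simp
    ring
  have hminS : ∑ j, min (y j) c ≤ S := by
    rw [← hyS]; exact Finset.sum_le_sum (fun i _ => min_le_left _ _)
  have hyi : ∀ i, (lam / (m : ℝ)) * ∑ j, min (y j) c ≤ min (y i) c := by
    intro i
    rcases le_total (y i) c with h | h
    · rw [min_eq_left h]
      have h1 : (lam / (m : ℝ)) * ∑ j, min (y j) c ≤ (lam / (m : ℝ)) * S :=
        mul_le_mul_of_nonneg_left hminS (by positivity)
      have h2 : 0 ≤ (1 - lam) * f i (π i) := mul_nonneg (by linarith) (hf0 i)
      simp only [hy]; linarith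
    · rw [min_eq_right h]
      have h1 : ∑ j, min (y j) c ≤ (m : ℝ) * c := by
        calc ∑ j, min (y j) c ≤ ∑ _j : Fin m, c :=
              Finset.sum_le_sum (fun j _ => min_le_right _ _)
          _ = (m : ℝ) * c := by
              rw [Finset.sum_const, Finset.card_univ, Fintype.card_fin, nsmul_eq_mul]
      calc (lam / (m : ℝ)) * ∑ j, min (y j) c ≤ (lam / (m : ℝ)) * ((m : ℝ) * c) :=
            mul_le_mul_of_nonneg_left h1 (by positivity)
        _ = lam * c := by field_simp
        _ ≤ c := by nlinarith
  have key : ∀ i, lam * α * (OPT - ε) ≤ y i := by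
    intro i
    have h1 : lam * α * (OPT - ε) ≤ lam * α * c :=
      mul_le_mul_of_nonneg_left hcOPT (mul_nonneg hlam0 hα0)
    have h2 : lam * (α * c) ≤ lam * ((1 / (m : ℝ)) * ∑ j, min (y j) c) := by
      refine mul_le_mul_of_nonneg_left ?_ hlam0
      simpa only [hy] using hsat
    have e1 : lam * α * c = lam * (α * c) := by ring
    have e2 : lam * ((1 / (m : ℝ)) * ∑ j, min (y j) c)
        = (lam / (m : ℝ)) * ∑ j, min (y j) c := by ring
    have h3 := hyi i
    have h4 : min (y i) c ≤ y i := min_le_left _ _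
    linarith
  obtain ⟨i1, -, hinf⟩ := Finset.exists_mem_eq_inf' hne (fun i => f i (π i))
  rw [hinf]
  exact key i1
end

section
/- CombSfaSwp heterogeneous guarantee: let F_1(π) = min_i f_i(A_i^π) and F_2(π) = (1/m)Σ_i f_i(A_i^π), let π̂_1 satisfy F_1(π̂_1) ≥ α F_1(π) for all π, let π̂_2 satisfy F_2(π̂_2) ≥ β F_2(π) for all π, where 0 < α, β ≤ 1. Then for any 0 ≤ λ ≤ 1 with λ̄ = 1-λ, max{λ̄F_1(π̂_1)+λF_2(π̂_1), λ̄F_1(π̂_2)+λF_2(π̂_2)} ≥ max{βα/(λ̄β+α), λβ} · max_π [λ̄F_1(π)+λF_2(π)]. -/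
open Finset

theorem stmt13 {V : Type*} [Fintype V] [DecidableEq V] {m : ℕ}
    (hne : (Finset.univ : Finset (Fin m)).Nonempty)
    (f : Fin m → Finset V → ℝ)
    (hsub : ∀ i, Submodular (f i))
    (hmono : ∀ i, ∀ S T : Finset V, S ⊆ T → f i S ≤ f i T)
    (hnorm : ∀ i, f i ∅ = 0)
    (α β lam : ℝ) (hα0 : 0 < α) (hα1 : α ≤ 1) (hβ0 : 0 < β) (hβ1 : β ≤ 1)
    (hlam0 : 0 ≤ lam) (hlam1 : lam ≤ 1)
    (π₁ π₂ : Fin m → Finset V) (hπ₁ : IsPartition π₁) (hπ₂ : IsPartition π₂) :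
    let F₁ : (Fin m → Finset V) → ℝ := fun B => univ.inf' hne (fun i => f i (B i))
    let F₂ : (Fin m → Finset V) → ℝ := fun B => (1 / (m : ℝ)) * ∑ i, f i (B i)
    (∀ B : Fin m → Finset V, IsPartition B → α * F₁ B ≤ F₁ π₁) →
    (∀ B : Fin m → Finset V, IsPartition B → β * F₂ B ≤ F₂ π₂) →
    ∀ B : Fin m → Finset V, IsPartition B →
      max (β * α / ((1 - lam) * β + α)) (lam * β) * ((1 - lam) * F₁ B + lam * F₂ B) ≤
        max ((1 - lam) * F₁ π₁ + lam * F₂ π₁) ((1 - lam) * F₁ π₂ + lam * F₂ π₂) := by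
  intro F₁ F₂ h1 h2 B hB
  have hm0 : 0 < m := by
    rcases hne with ⟨i, _⟩; exact i.pos
  have hmR : 0 < (m : ℝ) := Nat.cast_pos.mpr hm0
  have hF1nn : ∀ C : Fin m → Finset V, 0 ≤ F₁ C := by
    intro C
    apply Finset.le_inf'
    intro i _
    have h := hmono i ∅ (C i) (Finset.empty_subset _)
    rw [hnorm i] at h; exact h
  have hle : ∀ C : Fin m → Finset V, F₁ C ≤ F₂ C := by
    intro C
    have hsum : (m : ℝ) * F₁ C ≤ ∑ i, f i (C i) := by
      have h : ∑ _i : Fin m, F₁ C ≤ ∑ i, f i (C i) :=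
        Finset.sum_le_sum (fun i _ => Finset.inf'_le _ (Finset.mem_univ i))
      simpa [Finset.card_univ, mul_comm] using h
    have h2' := mul_le_mul_of_nonneg_left hsum (le_of_lt (one_div_pos.mpr hmR))
    calc F₁ C = (1 / (m : ℝ)) * ((m : ℝ) * F₁ C) := by field_simp
      _ ≤ F₂ C := h2'
  have hlb0 : 0 ≤ 1 - lam := by linarith
  have hd : 0 < (1 - lam) * β + α := by nlinarith
  set G₁ := (1 - lam) * F₁ π₁ + lam * F₂ π₁ with hG₁
  set G₂ := (1 - lam) * F₁ π₂ + lam * F₂ π₂ with hG₂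
  have hGB0 : 0 ≤ (1 - lam) * F₁ B + lam * F₂ B := by
    nlinarith [hF1nn B, hle B]
  -- second bound
  have key2 : lam * β * ((1 - lam) * F₁ B + lam * F₂ B) ≤ G₂ := by
    have h2' := h2 B hB
    have hF2B : (1 - lam) * F₁ B + lam * F₂ B ≤ F₂ B := by nlinarith [hle B]
    have t1 := mul_le_mul_of_nonneg_left hF2B (mul_nonneg hlam0 hβ0.le)
    have t2 := mul_le_mul_of_nonneg_left h2' hlam0
    have t3 : 0 ≤ (1 - lam) * F₁ π₂ := mul_nonneg hlb0 (hF1nn π₂)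
    rw [hG₂]; nlinarith
  -- first bound
  set μ := (1 - lam) * β / ((1 - lam) * β + α) with hμ
  have hμ0 : 0 ≤ μ := div_nonneg (mul_nonneg hlb0 hβ0.le) hd.le
  have hμ1 : μ ≤ 1 := by
    rw [hμ, div_le_one hd]; linarith
  have hA := h1 B hB
  have hG1 : α * F₁ B ≤ G₁ := by
    have : F₁ π₁ ≤ G₁ := by rw [hG₁]; nlinarith [hle π₁]
    linarith
  have hG2 : lam * β * F₂ B ≤ G₂ := by
    have h2' := h2 B hB
    have t2 := mul_le_mul_of_nonneg_left h2' hlam0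
    have t3 : 0 ≤ (1 - lam) * F₁ π₂ := mul_nonneg hlb0 (hF1nn π₂)
    rw [hG₂]; nlinarith
  have key1 : β * α / ((1 - lam) * β + α) * ((1 - lam) * F₁ B + lam * F₂ B) ≤
      max G₁ G₂ := by
    have e1 : β * α / ((1 - lam) * β + α) * (1 - lam) = μ * α := by
      rw [hμ]; field_simp
    have e2 : β * α / ((1 - lam) * β + α) * lam = (1 - μ) * (lam * β) := by
      rw [hμ]; field_simp; ring
    have t1 := mul_le_mul_of_nonneg_left hG1 hμ0
    have t2 := mul_le_mul_of_nonneg_left hG2 (by linarith : (0:ℝ) ≤ 1 - μ)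
    have t3 := mul_le_mul_of_nonneg_left (le_max_left G₁ G₂) hμ0
    have t4 := mul_le_mul_of_nonneg_left (le_max_right G₁ G₂)
      (by linarith : (0:ℝ) ≤ 1 - μ)
    calc β * α / ((1 - lam) * β + α) * ((1 - lam) * F₁ B + lam * F₂ B)
        = μ * (α * F₁ B) + (1 - μ) * (lam * β * F₂ B) := by
          rw [mul_add, ← mul_assoc, ← mul_assoc, e1, e2]; ring
      _ ≤ μ * G₁ + (1 - μ) * G₂ := by linarith
      _ ≤ max G₁ G₂ := by linarith
  rw [max_mul_of_nonneg _ _ hGB0]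
  exact max_le key1 (key2.trans (le_max_right _ _))
end

section
/- CombSlbSmp heterogeneous guarantee: let F_1(π) = max_i f_i(A_i^π) and F_2(π) = (1/m)Σ_i f_i(A_i^π), let π̂_1 satisfy F_1(π̂_1) ≤ α F_1(π) for all π, and π̂_2 satisfy F_2(π̂_2) ≤ β F_2(π) for all π, where α, β ≥ 1. Then for 0 ≤ λ ≤ 1 with λ̄ = 1-λ, min{λ̄F_1(π̂_1)+λF_2(π̂_1), λ̄F_1(π̂_2)+λF_2(π̂_2)} ≤ min{mα/(mλ̄+λ), β(mλ̄+λ)} · min_π [λ̄F_1(π)+λF_2(π)]. -/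
open Finset

theorem stmt14 {V : Type*} [Fintype V] [DecidableEq V] {m : ℕ}
    (hne : (Finset.univ : Finset (Fin m)).Nonempty)
    (f : Fin m → Finset V → ℝ)
    (hnonneg : ∀ i (S : Finset V), 0 ≤ f i S)
    (α β lam : ℝ) (hα : 1 ≤ α) (hβ : 1 ≤ β)
    (hlam0 : 0 ≤ lam) (hlam1 : lam ≤ 1)
    (π₁ π₂ : Fin m → Finset V) (hπ₁ : IsPartition π₁) (hπ₂ : IsPartition π₂) :
    let F₁ : (Fin m → Finset V) → ℝ := fun B => univ.sup' hne (fun i => f i (B i))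
    let F₂ : (Fin m → Finset V) → ℝ := fun B => (1 / (m : ℝ)) * ∑ i, f i (B i)
    (∀ B : Fin m → Finset V, IsPartition B → F₁ π₁ ≤ α * F₁ B) →
    (∀ B : Fin m → Finset V, IsPartition B → F₂ π₂ ≤ β * F₂ B) →
    ∀ B : Fin m → Finset V, IsPartition B →
      min ((1 - lam) * F₁ π₁ + lam * F₂ π₁) ((1 - lam) * F₁ π₂ + lam * F₂ π₂) ≤
        min ((m : ℝ) * α / ((m : ℝ) * (1 - lam) + lam)) (β * ((m : ℝ) * (1 - lam) + lam)) *
          ((1 - lam) * F₁ B + lam * F₂ B) := by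
  intro F₁ F₂ h1 h2 B hB
  have hmpos : 0 < m := Fin.pos_iff_nonempty.mpr (Finset.univ_nonempty_iff.mp hne)
  have hm : (1 : ℝ) ≤ (m : ℝ) := by exact_mod_cast hmpos
  have hm0 : (0 : ℝ) < (m : ℝ) := by linarith
  have hlam1' : 0 ≤ 1 - lam := by linarith
  -- F₁ nonneg
  have hF1nn : ∀ π : Fin m → Finset V, 0 ≤ F₁ π := fun π => by
    obtain ⟨i, hi⟩ := hne
    exact le_trans (hnonneg i (π i)) (Finset.le_sup' (fun j => f j (π j)) hi)
  have hF2nn : ∀ π : Fin m → Finset V, 0 ≤ F₂ π := fun π => by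
    apply mul_nonneg (by positivity)
    exact Finset.sum_nonneg fun i _ => hnonneg i (π i)
  -- F₂ ≤ F₁
  have hF2le : ∀ π : Fin m → Finset V, F₂ π ≤ F₁ π := fun π => by
    have hsum : ∑ i, f i (π i) ≤ (m : ℝ) * F₁ π := by
      calc ∑ i, f i (π i) ≤ ∑ _i : Fin m, F₁ π :=
            Finset.sum_le_sum fun i _ => Finset.le_sup' (fun j => f j (π j)) (Finset.mem_univ i)
        _ = (m : ℝ) * F₁ π := by
            rw [Finset.sum_const, Finset.card_univ, Fintype.card_fin, nsmul_eq_mul]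
    have : (1 / (m : ℝ)) * ∑ i, f i (π i) ≤ (1 / (m : ℝ)) * ((m : ℝ) * F₁ π) :=
      mul_le_mul_of_nonneg_left hsum (by positivity)
    calc F₂ π = (1 / (m : ℝ)) * ∑ i, f i (π i) := rfl
      _ ≤ (1 / (m : ℝ)) * ((m : ℝ) * F₁ π) := this
      _ = F₁ π := by field_simp
  -- F₁ ≤ m F₂
  have hF1le : ∀ π : Fin m → Finset V, F₁ π ≤ (m : ℝ) * F₂ π := fun π => by
    have hsup : F₁ π ≤ ∑ i, f i (π i) := by
      apply Finset.sup'_le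
      intro i _
      exact Finset.single_le_sum (fun j _ => hnonneg j (π j)) (Finset.mem_univ i)
    calc F₁ π ≤ ∑ i, f i (π i) := hsup
      _ = (m : ℝ) * F₂ π := by
          show _ = (m : ℝ) * ((1 / (m : ℝ)) * _)
          field_simp
  set c : ℝ := (m : ℝ) * (1 - lam) + lam with hc
  have hc1 : 1 ≤ c := by nlinarith
  have hc0 : 0 < c := by linarith
  set G : (Fin m → Finset V) → ℝ := fun π => (1 - lam) * F₁ π + lam * F₂ π with hG
  have hGB : 0 ≤ G B := add_nonneg (mul_nonneg hlam1' (hF1nn B)) (mul_nonneg hlam0 (hF2nn B))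
  -- Bound 1 : G π₁ ≤ (m α / c) * G B
  have hb1 : G π₁ ≤ ((m : ℝ) * α / c) * G B := by
    have h11 : G π₁ ≤ F₁ π₁ := by
      have := mul_le_mul_of_nonneg_left (hF2le π₁) hlam0
      simp only [hG]; nlinarith
    have h12 : F₁ π₁ ≤ α * F₁ B := h1 B hB
    have h13 : c * F₁ B ≤ (m : ℝ) * G B := by
      have := mul_le_mul_of_nonneg_left (hF1le B) hlam0
      simp only [hG]; nlinarith [hF1nn B]
    have h14 : F₁ B ≤ ((m : ℝ) / c) * G B := by
      rw [div_mul_eq_mul_div, le_div_iff₀ hc0]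
      nlinarith
    calc G π₁ ≤ α * F₁ B := le_trans h11 h12
      _ ≤ α * (((m : ℝ) / c) * G B) := by
          apply mul_le_mul_of_nonneg_left h14 (by linarith)
      _ = ((m : ℝ) * α / c) * G B := by ring
  -- Bound 2 : G π₂ ≤ (β c) * G B
  have hb2 : G π₂ ≤ (β * c) * G B := by
    have h21 : G π₂ ≤ c * F₂ π₂ := by
      have := mul_le_mul_of_nonneg_left (hF1le π₂) hlam1'
      simp only [hG, hc]; nlinarith
    have h22 : F₂ π₂ ≤ β * F₂ B := h2 B hB
    have h23 : F₂ B ≤ G B := by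
      have := mul_le_mul_of_nonneg_left (hF2le B) hlam1'
      simp only [hG]; nlinarith
    calc G π₂ ≤ c * F₂ π₂ := h21
      _ ≤ c * (β * F₂ B) := mul_le_mul_of_nonneg_left h22 (le_of_lt hc0)
      _ ≤ c * (β * G B) := by
          apply mul_le_mul_of_nonneg_left _ (le_of_lt hc0)
          exact mul_le_mul_of_nonneg_left h23 (by linarith)
      _ = (β * c) * G B := by ring
  calc min (G π₁) (G π₂) ≤ min (((m : ℝ) * α / c) * G B) ((β * c) * G B) :=
        min_le_min hb1 hb2
    _ = min ((m : ℝ) * α / c) (β * c) * G B := (min_mul_of_nonneg _ _ hGB).symm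
end

section
/- Curvature sandwich: let f be monotone non-decreasing submodular with f(∅)=0, let X ⊆ V be nonempty, and define the curvature κ_f(X) = 1 − min_{v ∈ X} f(v | X \ v)/f({v}) (assuming f({v}) > 0 for all v). Then f(X) ≤ Σ_{j ∈ X} f({j}) ≤ [|X| / (1 + (|X|−1)(1−κ_f(X)))] · f(X). -/
open Finset

private lemma subadd {V : Type*} [DecidableEq V] (f : Finset V → ℝ)
    (hsub : Submodular f) (hnorm : f ∅ = 0) (X : Finset V) :
    f X ≤ ∑ j ∈ X, f {j} := by
  induction X using Finset.induction_on with
  | empty => simp [hnorm]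
  | @insert v S hv ih =>
    have h := hsub S {v}
    have h1 : S ∪ {v} = insert v S := by ext x; simp [or_comm]
    have h2 : S ∩ {v} = ∅ := by
      ext x; simp; intro hx hxv; exact hv (hxv ▸ hx)
    rw [h1, h2, hnorm] at h
    rw [Finset.sum_insert hv]
    linarith

private lemma chainA {V : Type*} [DecidableEq V] (f : Finset V → ℝ)
    (hsub : Submodular f) (X : Finset V) :
    ∀ S ⊆ X, f (X \ S) + ∑ i ∈ S, (f X - f (X.erase i)) ≤ f X := by
  intro S
  induction S using Finset.induction_on with
  | empty => simp
  | @insert v S hv ih =>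
    intro hSX
    have hvX : v ∈ X := hSX (Finset.mem_insert_self v S)
    have hS : S ⊆ X := fun x hx => hSX (Finset.mem_insert_of_mem hx)
    have key := hsub (X \ S) (X.erase v)
    have h1 : (X \ S) ∪ X.erase v = X := by
      ext x; simp [Finset.mem_sdiff, Finset.mem_erase]
      constructor
      · rintro (⟨h, _⟩ | ⟨_, h⟩) <;> exact h
      · intro hx
        by_cases hxv : x = v
        · left; exact ⟨hx, fun hxS => hv (hxv ▸ hxS)⟩
        · right; exact ⟨hxv, hx⟩
    have h2 : (X \ S) ∩ X.erase v = X \ insert v S := by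
      ext x; simp [Finset.mem_sdiff, Finset.mem_erase]; tauto
    rw [h1, h2] at key
    have ihS := ih hS
    rw [Finset.sum_insert hv]
    linarith

theorem stmt16 {V : Type*} [Fintype V] [DecidableEq V]
    (f : Finset V → ℝ) (hsub : Submodular f)
    (hmono : ∀ S T : Finset V, S ⊆ T → f S ≤ f T) (hnorm : f ∅ = 0)
    (X : Finset V) (hX : X.Nonempty)
    (hpos : ∀ v : V, 0 < f {v}) :
    f X ≤ ∑ j ∈ X, f {j} ∧
    ∑ j ∈ X, f {j} ≤
      ((X.card : ℝ) /
          (1 + ((X.card : ℝ) - 1) *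
            X.inf' hX (fun v => (f X - f (X.erase v)) / f {v}))) * f X := by
  set c : ℝ := X.inf' hX (fun v => (f X - f (X.erase v)) / f {v}) with hc
  set s : ℝ := ∑ j ∈ X, f {j} with hs
  set n : ℝ := (X.card : ℝ) with hn
  have hn1 : (1 : ℝ) ≤ n := by
    have h := Finset.card_pos.mpr hX
    rw [hn]
    exact_mod_cast h
  have hc0 : 0 ≤ c := by
    apply Finset.le_inf' hX
    intro v hv
    exact div_nonneg (sub_nonneg.2 (hmono _ _ (Finset.erase_subset v X))) (hpos v).le
  have hcle : ∀ i ∈ X, c * f {i} ≤ f X - f (X.erase i) := by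
    intro i hi
    have := Finset.inf'_le (fun v => (f X - f (X.erase v)) / f {v}) hi
    calc c * f {i} ≤ ((f X - f (X.erase i)) / f {i}) * f {i} :=
          mul_le_mul_of_nonneg_right this (hpos i).le
      _ = f X - f (X.erase i) := div_mul_cancel₀ _ (hpos i).ne'
  -- key per-element inequality
  have hkey : ∀ j ∈ X, f {j} + c * (s - f {j}) ≤ f X := by
    intro j hj
    have h := chainA f hsub X (X.erase j) (Finset.erase_subset j X)
    have hdiff : X \ X.erase j = {j} := by
      ext x; simp [Finset.mem_sdiff, Finset.mem_erase]
      constructor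
      · tauto
      · rintro rfl; exact ⟨hj, fun h => absurd rfl h⟩
    rw [hdiff] at h
    have hsum : c * (s - f {j}) ≤ ∑ i ∈ X.erase j, (f X - f (X.erase i)) := by
      have : s - f {j} = ∑ i ∈ X.erase j, f {i} := by
        rw [hs, ← Finset.add_sum_erase X (fun i => f {i}) hj]; ring
      rw [this, Finset.mul_sum]
      exact Finset.sum_le_sum fun i hi => hcle i (Finset.mem_of_mem_erase hi)
    linarith
  have hD : (0 : ℝ) < 1 + (n - 1) * c := by nlinarith
  constructor
  · exact subadd f hsub hnorm X
  · rw [div_mul_eq_mul_div, le_div_iff₀ hD]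
    -- need: s * (1 + (n-1)*c) ≤ n * f X
    have hsumkey : ∑ j ∈ X, (f {j} + c * (s - f {j})) ≤ ∑ j ∈ X, f X :=
      Finset.sum_le_sum hkey
    have hL : ∑ j ∈ X, (f {j} + c * (s - f {j})) = s + c * (n * s - s) := by
      rw [Finset.sum_add_distrib, ← Finset.mul_sum, Finset.sum_sub_distrib,
        Finset.sum_const, ← hs]
      ring
    have hR : ∑ j ∈ X, f X = n * f X := by
      rw [Finset.sum_const, nsmul_eq_mul, hn]
    rw [hL, hR] at hsumkey
    nlinarith [hsumkey]
end

section
/- MMax worst-case guarantee after one iteration: let f_1,…,f_m be monotone submodular with f_i(∅)=0, define h_i(X) = Σ_{j∈X} f_i({j}), and suppose the partition π̂ = (Â_1,…,Â_m) satisfies min_i h_i(Â_i) ≥ α · max_π min_i h_i(A_i^π) for some α ∈ (0,1]. Then min_i f_i(Â_i) ≥ α · [min_i (1+(|Â_i|−1)(1−κ_{f_i}(Â_i)))/|Â_i|] · max_π min_i f_i(A_i^π), where κ_f(A) = 1 − min_{v∈A} f(v|A\v)/f({v}). -/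
/-!
Submodularity makes the marginal values `f (v | X \ v)` lower bounds for the gains along any
chain inside `X`, so `f X ≥ f {v} + (1 - κ) · ∑_{u ∈ X \ v} f {u}` for every `v ∈ X`. Averaging
over `v` gives the curvature sandwich `f X ≥ [(1 + (|X| - 1)(1 - κ)) / |X|] · h X` with the
modular upper bound `h X = ∑_{u ∈ X} f {u} ≥ f X`. Hence `π̂` loses at most the factor `α` against
the optimum of `min_i h_i`, which in turn dominates the optimum of `min_i f_i`, and at most the
curvature factor when passing from `h_i` back to `f_i`.
-/

open Finset

namespace Submodular

variable {V : Type*} [DecidableEq V] {f : Finset V → ℝ}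

theorem le_sum_singleton (hf : Submodular f) (hempty : f ∅ = 0) (X : Finset V) :
    f X ≤ ∑ j ∈ X, f {j} := by
  induction X using Finset.induction_on with
  | empty => simp [hempty]
  | @insert a s ha ih =>
    have h := hf {a} s
    rw [← insert_eq, singleton_inter_of_notMem ha, hempty] at h
    rw [sum_insert ha]
    linarith

theorem marginal_antitone (hf : Submodular f) {S T : Finset V} (hST : S ⊆ T) {a : V}
    (ha : a ∉ T) : f (insert a T) - f T ≤ f (insert a S) - f S := by
  have h := hf (insert a S) T
  rw [insert_union, union_eq_right.2 hST, insert_inter_of_notMem ha,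
    inter_eq_left.2 hST] at h
  linarith

theorem add_sum_marginal_le (hf : Submodular f) {X B S : Finset V} (hB : B ⊆ X) (hS : S ⊆ X)
    (hBS : Disjoint B S) : f B + ∑ u ∈ S, (f X - f (X.erase u)) ≤ f (B ∪ S) := by
  induction S using Finset.induction_on with
  | empty => simp
  | @insert u s hu ih =>
    have huX : u ∈ X := hS (mem_insert_self u s)
    have huB : u ∉ B := disjoint_right.1 hBS (mem_insert_self u s)
    have hBs : B ∪ s ⊆ X.erase u := fun x hx => by
      rcases mem_union.1 hx with hx | hx
      · exact mem_erase.2 ⟨fun h => huB (h ▸ hx), hB hx⟩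
      · exact mem_erase.2 ⟨fun h => hu (h ▸ hx), hS (mem_insert_of_mem hx)⟩
    have hstep := hf.marginal_antitone hBs (notMem_erase u X)
    rw [insert_erase huX] at hstep
    have ih' := ih ((subset_insert u s).trans hS) (hBS.mono_right (subset_insert u s))
    rw [sum_insert hu, union_insert]
    linarith

theorem mul_sum_singleton_le (hf : Submodular f) {X : Finset V} {t : ℝ}
    (ht : ∀ u ∈ X, t * f {u} ≤ f X - f (X.erase u)) :
    (1 + ((#X : ℝ) - 1) * t) * ∑ u ∈ X, f {u} ≤ #X * f X := by
  have hpoint : ∀ v ∈ X, f {v} + t * (∑ u ∈ X, f {u} - f {v}) ≤ f X := by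
    intro v hv
    have hchain := hf.add_sum_marginal_le (singleton_subset_iff.2 hv) (erase_subset v X)
      (disjoint_singleton_left.2 (notMem_erase v X))
    rw [singleton_union, insert_erase hv] at hchain
    have hgain : t * ∑ u ∈ X.erase v, f {u} ≤ ∑ u ∈ X.erase v, (f X - f (X.erase u)) := by
      rw [mul_sum]
      exact sum_le_sum fun u hu => ht u (mem_of_mem_erase hu)
    rw [← sum_erase_eq_sub hv]
    linarith
  have hsum := sum_le_sum hpoint
  simp only [sum_add_distrib, ← mul_sum, sum_sub_distrib, sum_const, nsmul_eq_mul] at hsum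
  linarith

end Submodular

section Curvature

variable {V : Type*} [DecidableEq V] {f : Finset V → ℝ}

theorem inf'_marginal_div_mul_le (hpos : ∀ v, 0 < f {v}) {X : Finset V} (hX : X.Nonempty)
    {u : V} (hu : u ∈ X) :
    X.inf' hX (fun v => (f X - f (X.erase v)) / f {v}) * f {u} ≤ f X - f (X.erase u) :=
  (le_div_iff₀ (hpos u)).1 (inf'_le _ hu)

theorem inf'_marginal_div_nonneg (hmono : ∀ S T : Finset V, S ⊆ T → f S ≤ f T)
    (hpos : ∀ v, 0 < f {v}) {X : Finset V} (hX : X.Nonempty) :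
    0 ≤ X.inf' hX (fun v => (f X - f (X.erase v)) / f {v}) :=
  le_inf' _ _ fun v _ =>
    div_nonneg (sub_nonneg.2 (hmono _ _ (erase_subset v X))) (hpos v).le

theorem Submodular.curvature_factor_mul_sum_singleton_le (hf : Submodular f)
    (hpos : ∀ v, 0 < f {v}) {X : Finset V} (hX : X.Nonempty) :
    (1 + ((#X : ℝ) - 1) * X.inf' hX (fun v => (f X - f (X.erase v)) / f {v})) / #X *
      ∑ u ∈ X, f {u} ≤ f X := by
  have hcard : (0 : ℝ) < #X := by exact_mod_cast hX.card_pos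
  rw [div_mul_eq_mul_div, div_le_iff₀ hcard, mul_comm (f X)]
  exact hf.mul_sum_singleton_le fun u hu => inf'_marginal_div_mul_le hpos hX hu

theorem curvature_factor_nonneg (hmono : ∀ S T : Finset V, S ⊆ T → f S ≤ f T)
    (hpos : ∀ v, 0 < f {v}) {X : Finset V} (hX : X.Nonempty) :
    0 ≤ (1 + ((#X : ℝ) - 1) * X.inf' hX (fun v => (f X - f (X.erase v)) / f {v})) / #X := by
  have hcard : (1 : ℝ) ≤ #X := by exact_mod_cast hX.card_pos
  have ht := inf'_marginal_div_nonneg hmono hpos hX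
  positivity

end Curvature

theorem stmt17_general {V : Type*} [Fintype V] [DecidableEq V] {m : ℕ}
    (hne : (Finset.univ : Finset (Fin m)).Nonempty)
    (f : Fin m → Finset V → ℝ)
    (hsub : ∀ i, Submodular (f i))
    (hmono : ∀ i, ∀ S T : Finset V, S ⊆ T → f i S ≤ f i T)
    (hnorm : ∀ i, f i ∅ = 0)
    (hpos : ∀ i (v : V), 0 < f i {v})
    (α : ℝ) (hα0 : 0 < α)
    (πh : Fin m → Finset V)
    (hblk : ∀ i, (πh i).Nonempty)
    (happrox : ∀ π : Fin m → Finset V, IsPartition π →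
      α * univ.inf' hne (fun i => ∑ j ∈ π i, f i {j}) ≤
        univ.inf' hne (fun i => ∑ j ∈ πh i, f i {j})) :
    ∀ π : Fin m → Finset V, IsPartition π →
      α * univ.inf' hne (fun i =>
            (1 + (((πh i).card : ℝ) - 1) *
              (πh i).inf' (hblk i) (fun v => (f i (πh i) - f i ((πh i).erase v)) / f i {v})) /
            ((πh i).card : ℝ)) *
          univ.inf' hne (fun i => f i (π i)) ≤
        univ.inf' hne (fun i => f i (πh i)) := by
  intro π hπ
  set c : Fin m → ℝ := fun i =>
    (1 + (((πh i).card : ℝ) - 1) *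
      (πh i).inf' (hblk i) (fun v => (f i (πh i) - f i ((πh i).erase v)) / f i {v})) /
    ((πh i).card : ℝ)
  have hc : ∀ i, 0 ≤ c i := fun i => curvature_factor_nonneg (hmono i) (hpos i) (hblk i)
  have hopt : α * univ.inf' hne (fun i => f i (π i)) ≤
      univ.inf' hne (fun i => ∑ j ∈ πh i, f i {j}) := by
    refine le_trans (mul_le_mul_of_nonneg_left ?_ hα0.le) (happrox π hπ)
    exact le_inf' _ _ fun i hi =>
      (inf'_le _ hi).trans ((hsub i).le_sum_singleton (hnorm i) (π i))
  refine le_inf' _ _ fun i hi => ?_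
  calc α * univ.inf' hne c * univ.inf' hne (fun i => f i (π i))
      = univ.inf' hne c * (α * univ.inf' hne (fun i => f i (π i))) := by ring
    _ ≤ univ.inf' hne c * univ.inf' hne (fun i => ∑ j ∈ πh i, f i {j}) :=
        mul_le_mul_of_nonneg_left hopt (le_inf' _ _ fun i _ => hc i)
    _ ≤ c i * ∑ j ∈ πh i, f i {j} :=
        mul_le_mul (inf'_le _ hi) (inf'_le _ hi)
          (le_inf' _ _ fun i _ => sum_nonneg fun j _ => (hpos i j).le) (hc i)
    _ ≤ f i (πh i) := (hsub i).curvature_factor_mul_sum_singleton_le (hpos i) (hblk i)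

theorem stmt17 {V : Type*} [Fintype V] [DecidableEq V] {m : ℕ}
    (hne : (Finset.univ : Finset (Fin m)).Nonempty)
    (f : Fin m → Finset V → ℝ)
    (hsub : ∀ i, Submodular (f i))
    (hmono : ∀ i, ∀ S T : Finset V, S ⊆ T → f i S ≤ f i T)
    (hnorm : ∀ i, f i ∅ = 0)
    (hpos : ∀ i (v : V), 0 < f i {v})
    (α : ℝ) (hα0 : 0 < α) (hα1 : α ≤ 1)
    (πh : Fin m → Finset V) (hπh : IsPartition πh)
    (hblk : ∀ i, (πh i).Nonempty)
    (happrox : ∀ π : Fin m → Finset V, IsPartition π →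
      α * univ.inf' hne (fun i => ∑ j ∈ π i, f i {j}) ≤
        univ.inf' hne (fun i => ∑ j ∈ πh i, f i {j})) :
    ∀ π : Fin m → Finset V, IsPartition π →
      α * univ.inf' hne (fun i =>
            (1 + (((πh i).card : ℝ) - 1) *
              (πh i).inf' (hblk i) (fun v => (f i (πh i) - f i ((πh i).erase v)) / f i {v})) /
            ((πh i).card : ℝ)) *
          univ.inf' hne (fun i => f i (π i)) ≤
        univ.inf' hne (fun i => f i (πh i)) :=
  stmt17_general hne f hsub hmono hnorm hpos α hα0 πh hblk happrox
end

section
/- Modular upper bounds via supergradients: for a submodular function f on finite V and any X, Y ⊆ V, f(Y) ≤ f(X) − Σ_{j ∈ X\Y} f(j | X\{j}) + Σ_{j ∈ Y\X} f(j | ∅), and also f(Y) ≤ f(X) − Σ_{j ∈ X\Y} f(j | V\{j}) + Σ_{j ∈ Y\X} f(j | X); both bounds are tight when Y = X. -/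
/-!
Submodularity says that the gain `f (insert j S) - f S` of an element shrinks as `S` grows.
Adding the elements of `Y \ X` one at a time to `X ∩ Y` (resp. to `X`) and bounding each gain by
the gain at the smaller set `∅` (resp. `X`) bounds `f Y` (resp. `f (X ∪ Y)`) from above; adding the
elements of `X \ Y` one at a time to `X ∩ Y` (resp. to `Y`) and bounding each gain from below by
the gain at the larger set `X` (resp. `univ`) bounds `f X` (resp. `f (X ∪ Y)`) from below.
Combining the two chains gives both modular upper bounds.
-/

open Finset

namespace Submodular

variable {V : Type*} [DecidableEq V] {f : Finset V → ℝ}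

theorem insert_gain_antitone (hf : Submodular f) {S T : Finset V} {j : V} (hST : S ⊆ T)
    (hj : j ∉ T) : f (insert j T) - f T ≤ f (insert j S) - f S := by
  have h := hf (insert j S) T
  rw [insert_union, union_eq_right.mpr hST, insert_inter_of_notMem hj,
    inter_eq_left.mpr hST] at h
  linarith

theorem erase_gain_antitone (hf : Submodular f) {S T : Finset V} {j : V} (hST : S ⊆ T)
    (hj : j ∈ S) : f T - f (T.erase j) ≤ f S - f (S.erase j) := by
  have h := hf.insert_gain_antitone (erase_subset_erase j hST) (notMem_erase j T)
  rwa [insert_erase hj, insert_erase (hST hj)] at h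

theorem le_add_sum_insert_gain (hf : Submodular f) {A B : Finset V} (hBA : B ⊆ A)
    {D : Finset V} (hDA : Disjoint D A) :
    f (A ∪ D) ≤ f A + ∑ j ∈ D, (f (insert j B) - f B) := by
  induction D using Finset.induction_on with
  | empty => simp
  | insert j D hjD ih =>
    rw [disjoint_insert_left] at hDA
    have hj : j ∉ A ∪ D := by simp [hDA.1, hjD]
    have hgain := hf.insert_gain_antitone (hBA.trans subset_union_left) hj
    rw [sum_insert hjD, union_insert]
    linarith [ih hDA.2]

theorem add_sum_erase_gain_le (hf : Submodular f) {A D T : Finset V} (hT : A ∪ D ⊆ T)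
    (hDA : Disjoint D A) :
    f A + ∑ j ∈ D, (f T - f (T.erase j)) ≤ f (A ∪ D) := by
  induction D using Finset.induction_on with
  | empty => simp
  | insert j D hjD ih =>
    rw [disjoint_insert_left] at hDA
    rw [union_insert] at hT
    have hj : j ∉ A ∪ D := by simp [hDA.1, hjD]
    have hgain := hf.erase_gain_antitone hT (mem_insert_self j (A ∪ D))
    rw [erase_insert hj] at hgain
    rw [sum_insert hjD, union_insert]
    linarith [ih ((subset_insert j _).trans hT) hDA.2]

end Submodular

theorem stmt19 {V : Type*} [Fintype V] [DecidableEq V]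
    (f : Finset V → ℝ) (hsub : Submodular f) :
    (∀ X Y : Finset V,
      f Y ≤ f X - (∑ j ∈ X \ Y, (f X - f (X.erase j))) + ∑ j ∈ Y \ X, (f {j} - f ∅)) ∧
    (∀ X Y : Finset V,
      f Y ≤ f X - (∑ j ∈ X \ Y, (f Finset.univ - f (Finset.univ.erase j))) +
        ∑ j ∈ Y \ X, (f (insert j X) - f X)) ∧
    (∀ X : Finset V,
      (f X - (∑ j ∈ X \ X, (f X - f (X.erase j))) + ∑ j ∈ X \ X, (f {j} - f ∅) = f X) ∧
      (f X - (∑ j ∈ X \ X, (f Finset.univ - f (Finset.univ.erase j))) +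
        ∑ j ∈ X \ X, (f (insert j X) - f X) = f X)) := by
  refine ⟨fun X Y => ?_, fun X Y => ?_, fun X => by simp⟩
  · have hupper := hsub.le_add_sum_insert_gain (empty_subset (Y ∩ X)) (disjoint_sdiff_inter Y X)
    have hlower := hsub.add_sum_erase_gain_le (T := X)
      (by rw [union_comm, sdiff_union_inter]) (disjoint_sdiff_inter X Y)
    rw [union_comm, sdiff_union_inter] at hupper hlower
    rw [inter_comm] at hupper
    simp only [insert_empty] at hupper
    linarith
  · have hupper := hsub.le_add_sum_insert_gain subset_rfl (sdiff_disjoint : Disjoint (Y \ X) X)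
    have hlower := hsub.add_sum_erase_gain_le (subset_univ (Y ∪ X \ Y)) sdiff_disjoint
    rw [union_sdiff_self_eq_union] at hupper hlower
    rw [union_comm] at hlower
    linarith
end
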